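/- arXiv:1404.7660 — 3 statements merged into one kernel-verified Lean document; each statement's English description precedes it below -/
import Mathlib

section
/- Let f : I ⊆ ℝ → ℝ be differentiable on I° with f' integrable on [a,b], where a, b ∈ I° with a < b, and let q > 1 with 1/p + 1/q = 1. Suppose |f'|^q is a P-function on [a,b]. Then |(1/6)[f(a) + 4 f((a+b)/2) + f(b)] - (1/(b-a)) ∫_a^b f(x) dx| ≤ ((b-a)/12)((1 + 2^{p+1})/(3(p+1)))^{1/p} · [(|f'((a+b)/2)|^q + |f'(a)|^q)^{1/q} + (|f'((a+b)/2)|^q + |f'(b)|^q)^{1/q}]. -/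
/-!
Integrating by parts against the Peano kernels `(x - a)/(b - a) - 1/6` on `[a, m]` and
`(x - a)/(b - a) - 5/6` on `[m, b]`, `m = (a + b)/2`, writes the Simpson error as
`∫ k f'`. On each half, Hölder's inequality separates the kernel, whose `L^p` norm is
computed explicitly, from `f'`; the `P`-function inequality bounds `|f'|^q` on `[a, m]` by
`|f' m|^q + |f' a|^q`, and on `[m, b]` by `|f' m|^q + |f' b|^q`.
-/

open MeasureTheory Set Real

/-- `g` is a `P`-function on the set `s`: it is nonnegative on `s` and
`g (t*x + (1-t)*y) ≤ g x + g y` for all `x, y ∈ s` and `t ∈ [0,1]`. -/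
def IsPFunctionOn (g : ℝ → ℝ) (s : Set ℝ) : Prop :=
  (∀ x ∈ s, 0 ≤ g x) ∧
    ∀ x ∈ s, ∀ y ∈ s, ∀ t ∈ Set.Icc (0:ℝ) 1, g (t * x + (1 - t) * y) ≤ g x + g y

theorem IsPFunctionOn.le_add {g : ℝ → ℝ} {s : Set ℝ} (hg : IsPFunctionOn g s) {x y z : ℝ}
    (hx : x ∈ s) (hy : y ∈ s) (hz : z ∈ uIcc x y) : g z ≤ g x + g y := by
  rw [← segment_eq_uIcc] at hz
  obtain ⟨t, u, ht, hu, htu, rfl⟩ := hz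
  obtain rfl : u = 1 - t := by linarith
  exact hg.2 x hx y hy t ⟨ht, by linarith⟩

theorem integral_mul_deriv_of_hasDerivAt_const {u f f' : ℝ → ℝ} {A B α : ℝ}
    (hu : ∀ x, HasDerivAt u α x) (hf : ∀ x ∈ uIcc A B, HasDerivAt f (f' x) x)
    (hf' : IntervalIntegrable f' volume A B) :
    ∫ x in A..B, u x * f' x = u B * f B - u A * f A - α * ∫ x in A..B, f x := by
  rw [intervalIntegral.integral_mul_deriv_eq_deriv_mul (fun x _ => hu x) hf
    intervalIntegrable_const hf', intervalIntegral.integral_const_mul]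

theorem integral_abs_rpow_of_nonneg {p t : ℝ} (hp : -1 < p) (ht : 0 ≤ t) :
    ∫ y in 0..t, |y| ^ p = t ^ (p + 1) / (p + 1) := by
  have habs : EqOn (fun y : ℝ => |y| ^ p) (fun y => y ^ p) (uIcc 0 t) := fun y hy => by
    rw [uIcc_of_le ht] at hy
    simp only [abs_of_nonneg hy.1]
  rw [intervalIntegral.integral_congr habs, integral_rpow (Or.inl hp),
    zero_rpow (by linarith), sub_zero]

theorem integral_neg_abs_rpow {p s t : ℝ} (hp : 0 ≤ p) (hs : 0 ≤ s) (ht : 0 ≤ t) :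
    ∫ y in (-s)..t, |y| ^ p = (s ^ (p + 1) + t ^ (p + 1)) / (p + 1) := by
  have hcont : Continuous (fun y : ℝ => |y| ^ p) :=
    continuous_abs.rpow_const fun _ => Or.inr hp
  have hleft : ∫ y in (-s)..0, |y| ^ p = ∫ y in 0..s, |y| ^ p := by
    simpa using (intervalIntegral.integral_comp_neg (a := 0) (b := s) (fun y : ℝ => |y| ^ p)).symm
  rw [← intervalIntegral.integral_add_adjacent_intervals (b := 0) (hcont.intervalIntegrable _ _)
    (hcont.intervalIntegrable _ _), hleft, integral_abs_rpow_of_nonneg (by linarith) hs,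
    integral_abs_rpow_of_nonneg (by linarith) ht, add_div]

theorem intervalIntegral.integral_comp_sub_div_sub (f : ℝ → ℝ) {d : ℝ} (hd : d ≠ 0)
    (a c A B : ℝ) :
    ∫ x in A..B, f ((x - a) / d - c) = d * ∫ y in (A - a) / d - c..(B - a) / d - c, f y := by
  have hlin : ∀ x, (x - a) / d - c = x / d - (a / d + c) := fun x => by ring
  simp_rw [hlin, intervalIntegral.integral_comp_div_sub f hd, smul_eq_mul]

theorem integral_abs_mul_le_of_rpow_le {p q : ℝ} (hpq : p.HolderConjugate q) {A B K M : ℝ}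
    (hAB : A < B) {u g : ℝ → ℝ} (hu : ContinuousOn u (Icc A B))
    (hg : AEStronglyMeasurable g (volume.restrict (Ioc A B)))
    (hgM : ∀ x ∈ Ioc A B, |g x| ^ q ≤ M) (hu_avg : ∫ x in A..B, |u x| ^ p = (B - A) * K) :
    ∫ x in A..B, |u x * g x| ≤ (B - A) * K ^ (1 / p) * M ^ (1 / q) := by
  set μ := volume.restrict (Ioc A B)
  have : IsFiniteMeasure μ := isFiniteMeasure_restrict.2 measure_Ioc_lt_top.ne
  have hBA : 0 < B - A := sub_pos.2 hAB
  have hK : 0 ≤ K := by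
    refine nonneg_of_mul_nonneg_right ?_ hBA
    rw [← hu_avg]
    exact intervalIntegral.integral_nonneg hAB.le fun x _ => by positivity
  have hM : 0 ≤ M := (rpow_nonneg (abs_nonneg _) _).trans (hgM B ⟨hAB, le_rfl⟩)
  have hg_bdd : ∀ᵐ x ∂μ, ‖g x‖ ≤ M ^ (1 / q) := by
    filter_upwards [ae_restrict_mem measurableSet_Ioc] with x hx
    rw [norm_eq_abs, ← rpow_rpow_inv (abs_nonneg (g x)) hpq.symm.ne_zero, ← one_div]
    exact rpow_le_rpow (by positivity) (hgM x hx) (one_div_nonneg.2 hpq.symm.nonneg)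
  obtain ⟨C, hC⟩ := isCompact_Icc.exists_bound_of_continuousOn hu
  have hu_mem : MemLp u (ENNReal.ofReal p) μ := by
    refine MemLp.of_bound
      ((hu.mono Ioc_subset_Icc_self).aestronglyMeasurable measurableSet_Ioc) C ?_
    filter_upwards [ae_restrict_mem measurableSet_Ioc] with x hx
    exact hC x (Ioc_subset_Icc_self hx)
  have hg_q : ∫ x, ‖g x‖ ^ q ∂μ ≤ (B - A) * M := by
    calc ∫ x, ‖g x‖ ^ q ∂μ ≤ ∫ _, M ∂μ := by
          refine integral_mono_of_nonneg (.of_forall fun x => by positivity) (integrable_const M) ?_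
          filter_upwards [ae_restrict_mem measurableSet_Ioc] with x hx
          exact hgM x hx
      _ = (B - A) * M := by
          rw [integral_const, measureReal_restrict_apply_univ, volume_real_Ioc_of_le hAB.le,
            smul_eq_mul]
  have hBA_exp : (B - A) ^ (1 / p) * (B - A) ^ (1 / q) = B - A := by
    rw [← rpow_add hBA, one_div, one_div, hpq.inv_add_inv_eq_one, rpow_one]
  calc ∫ x in A..B, |u x * g x| = ∫ x, ‖u x‖ * ‖g x‖ ∂μ := by
        simp only [intervalIntegral.integral_of_le hAB.le, norm_eq_abs, abs_mul, μ]
    _ ≤ (∫ x, ‖u x‖ ^ p ∂μ) ^ (1 / p) * (∫ x, ‖g x‖ ^ q ∂μ) ^ (1 / q) :=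
        integral_mul_norm_le_Lp_mul_Lq hpq hu_mem (MemLp.of_bound hg _ hg_bdd)
    _ ≤ ((B - A) * K) ^ (1 / p) * ((B - A) * M) ^ (1 / q) := by
        have hu_p : ∫ x, ‖u x‖ ^ p ∂μ = (B - A) * K := by
          simp only [← hu_avg, intervalIntegral.integral_of_le hAB.le, norm_eq_abs, μ]
        rw [hu_p]
        gcongr
        exact one_div_nonneg.2 hpq.symm.nonneg
    _ = (B - A) * K ^ (1 / p) * M ^ (1 / q) := by
        rw [mul_rpow hBA.le hK, mul_rpow hBA.le hM]
        linear_combination (K ^ (1 / p) * M ^ (1 / q)) * hBA_exp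

theorem add_div_two_mem_uIcc (a b : ℝ) : (a + b) / 2 ∈ uIcc a b := by
  rcases le_total a b with h | h
  · exact mem_uIcc.2 (Or.inl ⟨by linarith, by linarith⟩)
  · exact mem_uIcc.2 (Or.inr ⟨by linarith, by linarith⟩)

theorem simpson_sub_average_eq {f f' : ℝ → ℝ} {a b : ℝ} (hab : a ≠ b)
    (hf : ∀ x ∈ uIcc a b, HasDerivAt f (f' x) x) (hf' : IntervalIntegrable f' volume a b) :
    1 / 6 * (f a + 4 * f ((a + b) / 2) + f b) - 1 / (b - a) * ∫ x in a..b, f x =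
      (∫ x in a..(a + b) / 2, ((x - a) / (b - a) - 1 / 6) * f' x) +
        ∫ x in (a + b) / 2..b, ((x - a) / (b - a) - 5 / 6) * f' x := by
  have hleft := uIcc_subset_uIcc_left (add_div_two_mem_uIcc a b)
  have hright := uIcc_subset_uIcc_right (add_div_two_mem_uIcc a b)
  have hfc : ContinuousOn f (uIcc a b) := fun x hx => (hf x hx).continuousAt.continuousWithinAt
  have hkernel (c x : ℝ) : HasDerivAt (fun y => (y - a) / (b - a) - c) (1 / (b - a)) x := by
    simpa using (((hasDerivAt_id x).sub_const a).div_const (b - a)).sub_const c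
  rw [integral_mul_deriv_of_hasDerivAt_const (hkernel _) (fun x hx => hf x (hleft hx))
      (hf'.mono_set hleft),
    integral_mul_deriv_of_hasDerivAt_const (hkernel _) (fun x hx => hf x (hright hx))
      (hf'.mono_set hright),
    ← intervalIntegral.integral_add_adjacent_intervals ((hfc.mono hleft).intervalIntegrable)
      ((hfc.mono hright).intervalIntegrable)]
  have hba : b - a ≠ 0 := sub_ne_zero.2 hab.symm
  field_simp
  ring

theorem one_div_six_rpow_add_one_div_three_rpow {p : ℝ} (hp : 0 ≤ p) :
    ((1 / 6) ^ (p + 1) + (1 / 3) ^ (p + 1)) / (p + 1) =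
      1 / 2 * ((1 / 6 : ℝ) ^ p * ((1 + 2 ^ (p + 1)) / (3 * (p + 1)))) := by
  have hthird : (1 / 3 : ℝ) ^ (p + 1) = 2 ^ (p + 1) * (1 / 6) ^ (p + 1) := by
    rw [← mul_rpow (by norm_num) (by norm_num)]
    norm_num
  rw [hthird, rpow_add_one (by norm_num)]
  field_simp
  ring

theorem integral_abs_simpson_kernel_left {p : ℝ} (hp : 0 ≤ p) {a b : ℝ} (hab : a < b) :
    ∫ x in a..(a + b) / 2, |(x - a) / (b - a) - 1 / 6| ^ p =
      ((a + b) / 2 - a) * ((1 / 6 : ℝ) ^ p * ((1 + 2 ^ (p + 1)) / (3 * (p + 1)))) := by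
  have hba : b - a ≠ 0 := (sub_pos.2 hab).ne'
  have hlo : (a - a) / (b - a) - 1 / 6 = -(1 / 6) := by ring
  have hhi : ((a + b) / 2 - a) / (b - a) - 1 / 6 = 1 / 3 := by field_simp; ring
  rw [intervalIntegral.integral_comp_sub_div_sub (fun y => |y| ^ p) hba, hlo, hhi,
    integral_neg_abs_rpow hp (by norm_num) (by norm_num),
    one_div_six_rpow_add_one_div_three_rpow hp]
  ring

theorem integral_abs_simpson_kernel_right {p : ℝ} (hp : 0 ≤ p) {a b : ℝ} (hab : a < b) :
    ∫ x in (a + b) / 2..b, |(x - a) / (b - a) - 5 / 6| ^ p =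
      (b - (a + b) / 2) * ((1 / 6 : ℝ) ^ p * ((1 + 2 ^ (p + 1)) / (3 * (p + 1)))) := by
  have hba : b - a ≠ 0 := (sub_pos.2 hab).ne'
  have hlo : ((a + b) / 2 - a) / (b - a) - 5 / 6 = -(1 / 3) := by field_simp; ring
  have hhi : (b - a) / (b - a) - 5 / 6 = 1 / 6 := by field_simp; ring
  rw [intervalIntegral.integral_comp_sub_div_sub (fun y => |y| ^ p) hba, hlo, hhi,
    integral_neg_abs_rpow hp (by norm_num) (by norm_num), add_comm,
    one_div_six_rpow_add_one_div_three_rpow hp]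
  ring

theorem stmt_8_general (I : Set ℝ) (hI : Convex ℝ I) (f f' : ℝ → ℝ)
    (a b : ℝ) (ha : a ∈ interior I) (hb : b ∈ interior I) (hab : a < b)
    (hdf : ∀ x ∈ interior I, HasDerivAt f (f' x) x)
    (hint : IntervalIntegrable f' MeasureTheory.volume a b)
    (p q : ℝ) (hp : 1 < p) (hpq : 1 / p + 1 / q = 1)
    (hP : IsPFunctionOn (fun x => |f' x| ^ q) (Set.Icc a b)) :
    |(1 / 6) * (f a + 4 * f ((a + b) / 2) + f b) - (1 / (b - a)) * ∫ x in a..b, f x|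
      ≤ ((b - a) / 12) * ((1 + 2 ^ (p + 1)) / (3 * (p + 1))) ^ (1 / p)
        * ((|f' ((a + b) / 2)| ^ q + |f' a| ^ q) ^ (1 / q)
          + (|f' ((a + b) / 2)| ^ q + |f' b| ^ q) ^ (1 / q)) := by
  have hpq' : p.HolderConjugate q :=
    Real.holderConjugate_iff.2 ⟨hp, by simpa only [one_div] using hpq⟩
  have hp0 : 0 ≤ p := by linarith
  have ham : a < (a + b) / 2 := by linarith
  have hmb : (a + b) / 2 < b := by linarith
  have hsub : uIcc a b ⊆ interior I := by
    rw [← segment_eq_uIcc]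
    exact hI.interior.segment_subset ha hb
  have hmem : (a + b) / 2 ∈ Icc a b := ⟨ham.le, hmb.le⟩
  have h₁ := (intervalIntegral.abs_integral_le_integral_abs ham.le).trans
    (integral_abs_mul_le_of_rpow_le hpq' ham (by fun_prop)
      (hint.1.aestronglyMeasurable.mono_set (Ioc_subset_Ioc_right hmb.le))
      (fun x hx => hP.le_add hmem (left_mem_Icc.2 hab.le)
        (Icc_subset_uIcc' (Ioc_subset_Icc_self hx)))
      (integral_abs_simpson_kernel_left hp0 hab))
  have h₂ := (intervalIntegral.abs_integral_le_integral_abs hmb.le).trans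
    (integral_abs_mul_le_of_rpow_le hpq' hmb (by fun_prop)
      (hint.1.aestronglyMeasurable.mono_set (Ioc_subset_Ioc_left ham.le))
      (fun x hx => hP.le_add hmem (right_mem_Icc.2 hab.le)
        (Icc_subset_uIcc (Ioc_subset_Icc_self hx)))
      (integral_abs_simpson_kernel_right hp0 hab))
  set C := (1 + 2 ^ (p + 1)) / (3 * (p + 1))
  have hK : ((1 / 6 : ℝ) ^ p * C) ^ (1 / p) = 1 / 6 * C ^ (1 / p) := by
    rw [mul_rpow (by positivity) (div_nonneg (by positivity) (by linarith)),
      ← rpow_mul (by norm_num), mul_one_div_cancel hpq'.ne_zero, rpow_one]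
  rw [hK] at h₁ h₂
  rw [simpson_sub_average_eq hab.ne (fun x hx => hdf x (hsub hx)) hint]
  calc _ ≤ _ := abs_add_le _ _
    _ ≤ _ := add_le_add h₁ h₂
    _ = _ := by ring

theorem stmt_8 (I : Set ℝ) (hI : Convex ℝ I) (f f' : ℝ → ℝ)
    (a b : ℝ) (ha : a ∈ interior I) (hb : b ∈ interior I) (hab : a < b)
    (hdf : ∀ x ∈ interior I, HasDerivAt f (f' x) x)
    (hint : IntervalIntegrable f' MeasureTheory.volume a b)
    (p q : ℝ) (hp : 1 < p) (hq : 1 < q) (hpq : 1 / p + 1 / q = 1)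
    (hP : IsPFunctionOn (fun x => |f' x| ^ q) (Set.Icc a b)) :
    |(1 / 6) * (f a + 4 * f ((a + b) / 2) + f b) - (1 / (b - a)) * ∫ x in a..b, f x|
      ≤ ((b - a) / 12) * ((1 + 2 ^ (p + 1)) / (3 * (p + 1))) ^ (1 / p)
        * ((|f' ((a + b) / 2)| ^ q + |f' a| ^ q) ^ (1 / q)
          + (|f' ((a + b) / 2)| ^ q + |f' b| ^ q) ^ (1 / q)) :=
  stmt_8_general I hI f f' a b ha hb hab hdf hint p q hp hpq hP
end

section
/- Let f : I ⊆ ℝ → ℝ be differentiable on I° with f' integrable on [a,b], where a, b ∈ I° with a < b, and let q > 1 with 1/p + 1/q = 1. Suppose |f'|^q is a P-function on [a,b]. Then |f((a+b)/2) - (1/(b-a)) ∫_a^b f(x) dx| ≤ ((b-a)/4)(1/(p+1))^{1/p} · [(|f'(b)|^q + 2|f'(a)|^q)^{1/q} + (|f'(a)|^q + 2|f'(b)|^q)^{1/q}]. -/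
open MeasureTheory Set Real

private lemma aux_rpow_le {A B q : ℝ} (hA : 0 ≤ A) (hq : 0 < q) (h : A ^ q ≤ B) :
    A ≤ B ^ (1/q) := by
  have h2 := Real.rpow_le_rpow (Real.rpow_nonneg hA q) h (by positivity : (0:ℝ) ≤ 1/q)
  rwa [← Real.rpow_mul hA, mul_one_div, div_self hq.ne', Real.rpow_one] at h2

private lemma aux_half_le {p : ℝ} (hp : 1 < p) : (1:ℝ)/2 ≤ (1/(p+1)) ^ (1/p) := by
  have hp0 : (0:ℝ) < p := by linarith
  have h1 : p + 1 ≤ (2:ℝ) ^ p := by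
    have := one_add_mul_self_le_rpow_one_add (by norm_num : (-1:ℝ) ≤ 1) hp.le
    norm_num at this
    linarith
  have hX : (0:ℝ) < (p+1) ^ (1/p) := Real.rpow_pos_of_pos (by linarith) _
  have h2 : (p+1) ^ (1/p) ≤ 2 := by
    calc (p+1) ^ (1/p) ≤ ((2:ℝ)^p) ^ (1/p) :=
          Real.rpow_le_rpow (by linarith) h1 (by positivity)
      _ = 2 := by
          rw [← Real.rpow_mul (by norm_num), mul_one_div, div_self hp0.ne', Real.rpow_one]
  have h3 : (1/(p+1) : ℝ) ^ (1/p) = 1 / ((p+1) ^ (1/p)) := by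
    rw [one_div, Real.inv_rpow (by linarith)]
    exact (one_div _).symm
  rw [h3]
  exact one_div_le_one_div_of_le hX h2

open intervalIntegral in
private lemma my_integral_id {a b : ℝ} : (∫ x in a..b, (x:ℝ)) = (b^2 - a^2)/2 :=
  integral_id

theorem stmt_10 (I : Set ℝ) (hI : Convex ℝ I) (f f' : ℝ → ℝ)
    (a b : ℝ) (ha : a ∈ interior I) (hb : b ∈ interior I) (hab : a < b)
    (hdf : ∀ x ∈ interior I, HasDerivAt f (f' x) x)
    (hint : IntervalIntegrable f' MeasureTheory.volume a b)
    (p q : ℝ) (hp : 1 < p) (hq : 1 < q) (hpq : 1 / p + 1 / q = 1)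
    (hP : IsPFunctionOn (fun x => |f' x| ^ q) (Set.Icc a b)) :
    |f ((a + b) / 2) - (1 / (b - a)) * ∫ x in a..b, f x|
      ≤ ((b - a) / 4) * (1 / (p + 1)) ^ (1 / p)
        * ((|f' b| ^ q + 2 * |f' a| ^ q) ^ (1 / q)
          + (|f' a| ^ q + 2 * |f' b| ^ q) ^ (1 / q)) := by
  obtain ⟨hP0, hP2⟩ := hP
  set m : ℝ := (a + b) / 2 with hmdef
  have ham : a < m := by rw [hmdef]; linarith
  have hmb : m < b := by rw [hmdef]; linarith
  have hq0 : (0:ℝ) < q := by linarith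
  have hIcc : Set.Icc a b ⊆ interior I := (hI.interior).ordConnected.out ha hb
  have hd : ∀ x ∈ Set.Icc a b, HasDerivAt f (f' x) x := fun x hx => hdf x (hIcc hx)
  have hfc : ContinuousOn f (Set.Icc a b) :=
    fun x hx => (hd x hx).continuousAt.continuousWithinAt
  have haI : a ∈ Set.Icc a b := ⟨le_refl a, hab.le⟩
  have hbI : b ∈ Set.Icc a b := ⟨hab.le, le_refl b⟩
  have hmI : m ∈ Set.Icc a b := ⟨ham.le, hmb.le⟩
  -- subinterval facts
  have hsub1 : Set.uIcc a m ⊆ Set.uIcc a b := by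
    rw [Set.uIcc_of_le ham.le, Set.uIcc_of_le hab.le]
    exact Set.Icc_subset_Icc (le_refl a) hmb.le
  have hsub2 : Set.uIcc m b ⊆ Set.uIcc a b := by
    rw [Set.uIcc_of_le hmb.le, Set.uIcc_of_le hab.le]
    exact Set.Icc_subset_Icc ham.le (le_refl b)
  have hint1 : IntervalIntegrable f' volume a m := hint.mono_set hsub1
  have hint2 : IntervalIntegrable f' volume m b := hint.mono_set hsub2
  have hfc1 : ContinuousOn f (Set.uIcc a m) := hfc.mono (by
    rw [Set.uIcc_of_le ham.le]; exact Set.Icc_subset_Icc (le_refl a) hmb.le)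
  have hfc2 : ContinuousOn f (Set.uIcc m b) := hfc.mono (by
    rw [Set.uIcc_of_le hmb.le]; exact Set.Icc_subset_Icc ham.le (le_refl b))
  have hfint1 : IntervalIntegrable f volume a m := hfc1.intervalIntegrable
  have hfint2 : IntervalIntegrable f volume m b := hfc2.intervalIntegrable
  -- integration by parts
  have ibp1 : ∫ x in a..m, (x - a) * f' x
      = (m - a) * f m - (a - a) * f a - ∫ x in a..m, 1 * f x := by
    apply intervalIntegral.integral_mul_deriv_eq_deriv_mul
      (u := fun x => x - a) (u' := fun _ => (1:ℝ))
    · intro x _; simpa using (hasDerivAt_id x).sub_const a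
    · intro x hx
      exact hd x (by rw [Set.uIcc_of_le ham.le] at hx
                     exact ⟨hx.1, hx.2.trans hmb.le⟩)
    · exact intervalIntegrable_const
    · exact hint1
  have ibp2 : ∫ x in m..b, (x - b) * f' x
      = (b - b) * f b - (m - b) * f m - ∫ x in m..b, 1 * f x := by
    apply intervalIntegral.integral_mul_deriv_eq_deriv_mul
      (u := fun x => x - b) (u' := fun _ => (1:ℝ))
    · intro x _; simpa using (hasDerivAt_id x).sub_const b
    · intro x hx
      exact hd x (by rw [Set.uIcc_of_le hmb.le] at hx
                     exact ⟨ham.le.trans hx.1, hx.2⟩)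
    · exact intervalIntegrable_const
    · exact hint2
  simp only [one_mul] at ibp1 ibp2
  have split : (∫ x in a..m, f x) + ∫ x in m..b, f x = ∫ x in a..b, f x :=
    intervalIntegral.integral_add_adjacent_intervals hfint1 hfint2
  have sum_eq : (∫ x in a..m, (x - a) * f' x) + (∫ x in m..b, (x - b) * f' x)
      = (b - a) * f m - ∫ x in a..b, f x := by
    rw [ibp1, ibp2]
    have : (m - a) - (m - b) = b - a := by ring
    linarith [split]
  have hba : (0:ℝ) < b - a := by linarith
  have lhs_eq : f m - (1/(b-a)) * ∫ x in a..b, f x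
      = (1/(b-a)) * ((∫ x in a..m, (x - a) * f' x) + (∫ x in m..b, (x - b) * f' x)) := by
    rw [sum_eq]
    field_simp
  -- pointwise bounds via the P-function property
  set S1 : ℝ := |f' a| ^ q + |f' m| ^ q with hS1def
  set S2 : ℝ := |f' m| ^ q + |f' b| ^ q with hS2def
  have hS1 : (0:ℝ) ≤ S1 := by positivity
  have hS2 : (0:ℝ) ≤ S2 := by positivity
  set M1 : ℝ := S1 ^ (1/q) with hM1def
  set M2 : ℝ := S2 ^ (1/q) with hM2def
  have hM1 : 0 ≤ M1 := Real.rpow_nonneg hS1 _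
  have hM2 : 0 ≤ M2 := Real.rpow_nonneg hS2 _
  have hbd1 : ∀ x ∈ Set.Icc a m, |f' x| ≤ M1 := by
    intro x hx
    have ht : (m - x)/(m - a) ∈ Set.Icc (0:ℝ) 1 := by
      constructor
      · apply div_nonneg <;> linarith [hx.2, ham]
      · rw [div_le_one (by linarith)]; linarith [hx.1]
    have hne : m - a ≠ 0 := sub_ne_zero.mpr (ne_of_gt ham)
    have harg : (m - x)/(m - a) * a + (1 - (m - x)/(m - a)) * m = x := by
      have he : (m - x)/(m - a) * a + (1 - (m - x)/(m - a)) * m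
          = m - (m - x)/(m - a) * (m - a) := by ring
      rw [he, div_mul_cancel₀ _ hne]
      ring
    have := hP2 a haI m hmI _ ht
    rw [harg] at this
    exact aux_rpow_le (abs_nonneg _) hq0 this
  have hbd2 : ∀ x ∈ Set.Icc m b, |f' x| ≤ M2 := by
    intro x hx
    have ht : (b - x)/(b - m) ∈ Set.Icc (0:ℝ) 1 := by
      constructor
      · apply div_nonneg <;> linarith [hx.2, hmb]
      · rw [div_le_one (by linarith)]; linarith [hx.1]
    have hne : b - m ≠ 0 := sub_ne_zero.mpr (ne_of_gt hmb)
    have harg : (b - x)/(b - m) * m + (1 - (b - x)/(b - m)) * b = x := by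
      have he : (b - x)/(b - m) * m + (1 - (b - x)/(b - m)) * b
          = b - (b - x)/(b - m) * (b - m) := by ring
      rw [he, div_mul_cancel₀ _ hne]
      ring
    have := hP2 m hmI b hbI _ ht
    rw [harg] at this
    exact aux_rpow_le (abs_nonneg _) hq0 this
  -- integral bounds
  have hxf1 : IntervalIntegrable (fun x => (x - a) * f' x) volume a m :=
    hint1.continuousOn_mul (by fun_prop)
  have hxf2 : IntervalIntegrable (fun x => (x - b) * f' x) volume m b :=
    hint2.continuousOn_mul (by fun_prop)
  have comp1 : (∫ x in a..m, (x - a) * M1) = M1 * (m - a)^2 / 2 := by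
    rw [intervalIntegral.integral_mul_const]
    rw [intervalIntegral.integral_sub intervalIntegral.intervalIntegrable_id intervalIntegrable_const,
      my_integral_id, intervalIntegral.integral_const]
    simp only [smul_eq_mul]
    ring
  have comp2 : (∫ x in m..b, (b - x) * M2) = M2 * (b - m)^2 / 2 := by
    rw [intervalIntegral.integral_mul_const]
    rw [intervalIntegral.integral_sub intervalIntegrable_const intervalIntegral.intervalIntegrable_id,
      my_integral_id, intervalIntegral.integral_const]
    simp only [smul_eq_mul]
    ring
  have b1 : |∫ x in a..m, (x - a) * f' x| ≤ M1 * (m - a)^2 / 2 := by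
    calc |∫ x in a..m, (x - a) * f' x| ≤ ∫ x in a..m, |(x - a) * f' x| :=
          intervalIntegral.abs_integral_le_integral_abs ham.le
      _ ≤ ∫ x in a..m, (x - a) * M1 := by
          apply intervalIntegral.integral_mono_on ham.le hxf1.abs
            (by apply ContinuousOn.intervalIntegrable; fun_prop)
          intro x hx
          rw [abs_mul, abs_of_nonneg (by linarith [hx.1] : (0:ℝ) ≤ x - a)]
          exact mul_le_mul_of_nonneg_left (hbd1 x hx) (by linarith [hx.1])
      _ = M1 * (m - a)^2 / 2 := comp1
  have b2 : |∫ x in m..b, (x - b) * f' x| ≤ M2 * (b - m)^2 / 2 := by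
    calc |∫ x in m..b, (x - b) * f' x| ≤ ∫ x in m..b, |(x - b) * f' x| :=
          intervalIntegral.abs_integral_le_integral_abs hmb.le
      _ ≤ ∫ x in m..b, (b - x) * M2 := by
          apply intervalIntegral.integral_mono_on hmb.le hxf2.abs
            (by apply ContinuousOn.intervalIntegrable; fun_prop)
          intro x hx
          rw [abs_mul, abs_of_nonpos (by linarith [hx.2] : x - b ≤ (0:ℝ))]
          have : -(x - b) = b - x := by ring
          rw [this]
          exact mul_le_mul_of_nonneg_left (hbd2 x hx) (by linarith [hx.2])
      _ = M2 * (b - m)^2 / 2 := comp2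
  -- comparison of M's with the N's in the statement
  have hgm : |f' m| ^ q ≤ |f' a| ^ q + |f' b| ^ q := by
    have ht : (1/2 : ℝ) ∈ Set.Icc (0:ℝ) 1 := by norm_num
    have harg : (1/2 : ℝ) * a + (1 - 1/2) * b = m := by rw [hmdef]; ring
    have := hP2 a haI b hbI _ ht
    rwa [harg] at this
  set N1 : ℝ := (|f' b| ^ q + 2 * |f' a| ^ q) ^ (1/q) with hN1def
  set N2 : ℝ := (|f' a| ^ q + 2 * |f' b| ^ q) ^ (1/q) with hN2def
  have hN1 : 0 ≤ N1 := Real.rpow_nonneg (by positivity) _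
  have hN2 : 0 ≤ N2 := Real.rpow_nonneg (by positivity) _
  have hMN1 : M1 ≤ N1 :=
    Real.rpow_le_rpow hS1 (by rw [hS1def]; linarith) (by positivity)
  have hMN2 : M2 ≤ N2 :=
    Real.rpow_le_rpow hS2 (by rw [hS2def]; linarith) (by positivity)
  -- final assembly
  have hma : m - a = (b - a)/2 := by rw [hmdef]; ring
  have hbm : b - m = (b - a)/2 := by rw [hmdef]; ring
  have step : |f m - (1/(b-a)) * ∫ x in a..b, f x| ≤ (b - a)/8 * (M1 + M2) := by
    rw [lhs_eq, abs_mul, abs_of_nonneg (by positivity : (0:ℝ) ≤ 1/(b-a))]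
    calc (1/(b-a)) * |(∫ x in a..m, (x - a) * f' x) + (∫ x in m..b, (x - b) * f' x)|
        ≤ (1/(b-a)) * (M1 * (m - a)^2 / 2 + M2 * (b - m)^2 / 2) := by
          apply mul_le_mul_of_nonneg_left _ (by positivity)
          exact (abs_add_le _ _).trans (add_le_add b1 b2)
      _ = (b - a)/8 * (M1 + M2) := by
          rw [hma, hbm]; field_simp; ring
  have half := aux_half_le hp
  calc |f m - (1/(b-a)) * ∫ x in a..b, f x|
      ≤ (b - a)/8 * (M1 + M2) := step
    _ ≤ (b - a)/8 * (N1 + N2) := by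
        apply mul_le_mul_of_nonneg_left (add_le_add hMN1 hMN2) (by positivity)
    _ = (b - a)/4 * (1/2) * (N1 + N2) := by ring
    _ ≤ (b - a)/4 * ((1/(p+1)) ^ (1/p)) * (N1 + N2) := by
        apply mul_le_mul_of_nonneg_right _ (by positivity)
        apply mul_le_mul_of_nonneg_left half (by positivity)
    _ = ((b - a)/4) * (1/(p+1)) ^ (1/p) * (N1 + N2) := by ring
end

section
/- Let a, b ∈ ℝ with a < b, let n ∈ ℕ with n ≥ 2, and let q ≥ 1. Then |(1/3) A(aⁿ, bⁿ) + (2/3) Aⁿ(a,b) - L_n^n(a,b)| ≤ (5n(b-a)/36)(|b|^{(n-1)q} + |a|^{(n-1)q})^{1/q}. -/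
open Real Set MeasureTheory intervalIntegral

/-
The left-hand side is `(b - a)⁻¹` times the error of Simpson's rule `(f a + 4 f m + f b) / 6`,
`m = (a + b) / 2`, for `f x = xⁿ`. Integrating by parts against the Peano kernel
`x - (5a + b)/6` on `[a, m]`, `x - (a + 5b)/6` on `[m, b]` writes `(b - a)` times the rule minus
`∫ f` as `∫ K f'`, and `∫ |K| = 5 (b - a)² / 36`. On `[a, b]`, `|f'| ≤ n max(|a|, |b|)ⁿ⁻¹`, and
`max(x, y) ≤ (x^q + y^q)^(1/q)`.
-/

theorem integral_abs_sub_of_mem_Icc {u v γ : ℝ} (hγ : γ ∈ Icc u v) :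
    ∫ x in u..v, |x - γ| = ((γ - u) ^ 2 + (v - γ) ^ 2) / 2 := by
  have hint : ∀ s t : ℝ, IntervalIntegrable (fun x => |x - γ|) volume s t := fun s t =>
    (continuous_id.sub continuous_const).abs.intervalIntegrable s t
  have hleft : ∫ x in u..γ, |x - γ| = ∫ x in u..γ, (γ - x) :=
    integral_congr fun x hx => by
      rw [uIcc_of_le hγ.1] at hx
      simp only [abs_of_nonpos (sub_nonpos.2 hx.2), neg_sub]
  have hright : ∫ x in γ..v, |x - γ| = ∫ x in γ..v, (x - γ) :=
    integral_congr fun x hx => by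
      rw [uIcc_of_le hγ.2] at hx
      simp only [abs_of_nonneg (sub_nonneg.2 hx.1)]
  rw [← integral_add_adjacent_intervals (hint u γ) (hint γ v), hleft, hright,
    integral_sub intervalIntegrable_const intervalIntegrable_id,
    integral_sub intervalIntegrable_id intervalIntegrable_const]
  simp only [integral_id, intervalIntegral.integral_const, smul_eq_mul]
  ring

theorem integral_sub_mul_deriv {f f' : ℝ → ℝ} {u v : ℝ} (γ : ℝ)
    (hf : ∀ x ∈ uIcc u v, HasDerivAt f (f' x) x) (hf' : IntervalIntegrable f' volume u v) :
    ∫ x in u..v, (x - γ) * f' x = (v - γ) * f v - (u - γ) * f u - ∫ x in u..v, f x := by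
  simpa using integral_mul_deriv_eq_deriv_mul (u := fun x => x - γ) (u' := fun _ => 1)
    (fun x _ => (hasDerivAt_id x).sub_const γ) hf intervalIntegrable_const hf'

theorem abs_integral_sub_mul_le_of_abs_le {g : ℝ → ℝ} {u v γ M : ℝ} (hγ : γ ∈ Icc u v)
    (hM : ∀ x ∈ Icc u v, |g x| ≤ M) :
    |∫ x in u..v, (x - γ) * g x| ≤ M * (((γ - u) ^ 2 + (v - γ) ^ 2) / 2) := by
  have huv : u ≤ v := hγ.1.trans hγ.2
  calc |∫ x in u..v, (x - γ) * g x| ≤ ∫ x in u..v, M * |x - γ| := by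
        rw [← Real.norm_eq_abs]
        refine norm_integral_le_of_norm_le (g := fun x => M * |x - γ|) huv
          (Filter.Eventually.of_forall fun x hx => ?_)
          ((continuous_const.mul (continuous_id.sub continuous_const).abs).intervalIntegrable u v)
        rw [Real.norm_eq_abs, abs_mul, mul_comm]
        exact mul_le_mul_of_nonneg_right (hM x (Ioc_subset_Icc_self hx)) (abs_nonneg _)
    _ = M * (((γ - u) ^ 2 + (v - γ) ^ 2) / 2) := by
        rw [intervalIntegral.integral_const_mul, integral_abs_sub_of_mem_Icc hγ]

theorem abs_simpson_sub_integral_le {f f' : ℝ → ℝ} {a b M : ℝ} (hab : a ≤ b)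
    (hf : ∀ x ∈ Icc a b, HasDerivAt f (f' x) x) (hf' : IntervalIntegrable f' volume a b)
    (hM : ∀ x ∈ Icc a b, |f' x| ≤ M) :
    |(b - a) * ((f a + 4 * f ((a + b) / 2) + f b) / 6) - ∫ x in a..b, f x|
      ≤ 5 * (b - a) ^ 2 / 36 * M := by
  set m := (a + b) / 2 with hm
  set α := (5 * a + b) / 6 with hα
  set β := (a + 5 * b) / 6 with hβ
  have ham : a ≤ m := by linarith
  have hmb : m ≤ b := by linarith
  have hsub : ∀ {s t}, a ≤ s → t ≤ b → s ≤ t → uIcc s t ⊆ Icc a b := fun hs ht hst => by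
    rw [uIcc_of_le hst]; exact Icc_subset_Icc hs ht
  have hderiv : ∀ {s t}, a ≤ s → t ≤ b → s ≤ t → ∀ x ∈ uIcc s t, HasDerivAt f (f' x) x :=
    fun hs ht hst x hx => hf x (hsub hs ht hst hx)
  have hf'_int : ∀ {s t}, a ≤ s → t ≤ b → s ≤ t → IntervalIntegrable f' volume s t :=
    fun hs ht hst => hf'.mono_set (by rw [uIcc_of_le hab]; exact hsub hs ht hst)
  have hf_int : ∀ {s t}, a ≤ s → t ≤ b → s ≤ t → IntervalIntegrable f volume s t :=
    fun hs ht hst => (ContinuousOn.mono (fun x hx => (hf x hx).continuousAt.continuousWithinAt)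
      (hsub hs ht hst)).intervalIntegrable
  have hkernel : (b - a) * ((f a + 4 * f m + f b) / 6) - ∫ x in a..b, f x
      = (∫ x in a..m, (x - α) * f' x) + ∫ x in m..b, (x - β) * f' x := by
    rw [integral_sub_mul_deriv α (hderiv le_rfl hmb ham) (hf'_int le_rfl hmb ham),
      integral_sub_mul_deriv β (hderiv ham le_rfl hmb) (hf'_int ham le_rfl hmb),
      ← integral_add_adjacent_intervals (hf_int le_rfl hmb ham) (hf_int ham le_rfl hmb)]
    ring
  have hbound : ∀ {s t}, a ≤ s → t ≤ b → ∀ x ∈ Icc s t, |f' x| ≤ M :=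
    fun hs ht x hx => hM x ⟨hs.trans hx.1, hx.2.trans ht⟩
  rw [hkernel]
  calc _ ≤ M * (((α - a) ^ 2 + (m - α) ^ 2) / 2) + M * (((β - m) ^ 2 + (b - β) ^ 2) / 2) :=
        (abs_add_le _ _).trans <| add_le_add
          (abs_integral_sub_mul_le_of_abs_le ⟨by linarith, by linarith⟩ (hbound le_rfl hmb))
          (abs_integral_sub_mul_le_of_abs_le ⟨by linarith, by linarith⟩ (hbound ham le_rfl))
    _ = 5 * (b - a) ^ 2 / 36 * M := by ring

theorem max_le_rpow_add_rpow_one_div {x y p : ℝ} (hx : 0 ≤ x) (hy : 0 ≤ y) (hp : 0 < p) :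
    max x y ≤ (x ^ p + y ^ p) ^ (1 / p) := by
  calc max x y = (max x y ^ p) ^ (1 / p) := by
        rw [← rpow_mul (le_max_of_le_left hx), mul_one_div_cancel hp.ne', rpow_one]
    _ ≤ (x ^ p + y ^ p) ^ (1 / p) := by
        gcongr
        rcases max_choice x y with h | h <;> rw [h]
        · linarith [rpow_nonneg hy p]
        · linarith [rpow_nonneg hx p]

theorem stmt_12 (a b : ℝ) (hab : a < b) (n : ℕ) (hn : 2 ≤ n) (q : ℝ) (hq : 1 ≤ q) :
    |(1 / 3) * ((a ^ n + b ^ n) / 2) + (2 / 3) * ((a + b) / 2) ^ n - (b ^ (n + 1) - a ^ (n + 1)) / (((n : ℝ) + 1) * (b - a))|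
      ≤ (5 * (n : ℝ) * (b - a) / 36) * (|b| ^ (((n : ℝ) - 1) * q) + |a| ^ (((n : ℝ) - 1) * q)) ^ (1 / q) := by
  have hba : 0 < b - a := sub_pos.2 hab
  have hderiv_bound : ∀ x ∈ Icc a b, |(n : ℝ) * x ^ (n - 1)| ≤ n * max |b| |a| ^ (n - 1) := by
    intro x hx
    rw [abs_mul, Nat.abs_cast, abs_pow, max_comm]
    gcongr
    exact abs_le_max_abs_abs hx.1 hx.2
  have hsimpson := abs_simpson_sub_integral_le hab.le (fun x _ => hasDerivAt_pow n x)
    ((continuous_const.mul (continuous_pow _)).intervalIntegrable _ _) hderiv_bound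
  rw [integral_pow] at hsimpson
  have hmax : max |b| |a| ^ (n - 1)
      ≤ (|b| ^ (((n : ℝ) - 1) * q) + |a| ^ (((n : ℝ) - 1) * q)) ^ (1 / q) := by
    rw [show (n : ℝ) - 1 = ((n - 1 : ℕ) : ℝ) by rw [Nat.cast_sub (by omega), Nat.cast_one],
      rpow_mul (abs_nonneg b), rpow_mul (abs_nonneg a), rpow_natCast, rpow_natCast]
    refine le_trans ?_ (max_le_rpow_add_rpow_one_div (by positivity) (by positivity) (by linarith))
    rcases max_choice |b| |a| with h | h <;> rw [h]
    exacts [le_max_left _ _, le_max_right _ _]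
  have hsimpson_form : (1 / 3) * ((a ^ n + b ^ n) / 2) + (2 / 3) * ((a + b) / 2) ^ n
      - (b ^ (n + 1) - a ^ (n + 1)) / (((n : ℝ) + 1) * (b - a))
      = ((b - a) * ((a ^ n + 4 * ((a + b) / 2) ^ n + b ^ n) / 6)
        - (b ^ (n + 1) - a ^ (n + 1)) / (n + 1)) / (b - a) := by
    field_simp
    ring
  rw [hsimpson_form, abs_div, abs_of_pos hba, div_le_iff₀ hba]
  calc _ ≤ 5 * (b - a) ^ 2 / 36 * (n * max |b| |a| ^ (n - 1)) := hsimpson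
    _ = 5 * n * (b - a) / 36 * max |b| |a| ^ (n - 1) * (b - a) := by ring
    _ ≤ _ := by gcongr
end
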